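/- Monotonicity of log-determinant approximations: let A be positive definite and E ⊆ Ē be two lower-triangular sparsity patterns both containing all diagonal pairs. Define D(E) = −∑ᵢ log((L̂⁻¹)ᵢᵢ) where (L̂⁻¹)ᵢᵢ = det(A(Eᵢ \ {i}))/det(A(Eᵢ)). Then D(Ē) ≤ D(E). -/

import Mathlib

set_option linter.unusedSectionVars false

open Matrix

section Aux

variable {m k k' : Type*} [Fintype m] [DecidableEq m] [Fintype k] [DecidableEq k]
  [Fintype k'] [DecidableEq k']

omit [DecidableEq k] in
lemma posDef_submatrix_of_injective {A : Matrix m m ℝ} (hA : A.PosDef)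
    (e : k → m) (he : Function.Injective e) : (A.submatrix e e).PosDef := by
  refine Matrix.PosDef.of_dotProduct_mulVec_pos (hA.1.submatrix e) ?_
  intro x hx
  set y : m → ℝ := fun j => ∑ a : k, if e a = j then x a else 0 with hy
  have hyea : ∀ a : k, y (e a) = x a := by
    intro a
    simp only [hy]
    rw [Finset.sum_eq_single a]
    · simp
    · exact fun b _ hb => if_neg fun h => hb (he h)
    · simp
  have hyne : y ≠ 0 := by
    intro h
    apply hx
    funext a
    have := congrFun h (e a)
    rw [hyea a] at this
    simpa using this
  have hsum : ∀ z : m → ℝ, ∑ j, y j * z j = ∑ a, x a * z (e a) := by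
    intro z
    simp only [hy, Finset.sum_mul, ite_mul, zero_mul]
    rw [Finset.sum_comm]
    simp
  have key : dotProduct (star x) ((A.submatrix e e) *ᵥ x)
      = dotProduct (star y) (A *ᵥ y) := by
    simp only [dotProduct, star_trivial, Pi.star_apply, mulVec, submatrix_apply]
    rw [hsum fun j => ∑ l, A j l * y l]
    refine Finset.sum_congr rfl fun a _ => ?_
    congr 1
    have := hsum fun l => A (e a) l
    rw [show (∑ l : m, A (e a) l * y l) = ∑ l : m, y l * A (e a) l from
      Finset.sum_congr rfl fun l _ => mul_comm _ _, this]
    exact Finset.sum_congr rfl fun b _ => mul_comm _ _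
  rw [key]
  exact hA.dotProduct_mulVec_pos hyne

omit [DecidableEq k] [DecidableEq k'] in
/-- The diagonal entry of `Xᴴ Q X` only depends on the relevant column of `X`. -/
lemma herm_quad_entry_congr (Q : Matrix m m ℝ) (X : Matrix m k ℝ) (X' : Matrix m k' ℝ)
    (t : k) (t' : k') (h : ∀ a, X a t = X' a t') :
    (Xᴴ * Q * X) t t = (X'ᴴ * Q * X') t' t' := by
  simp only [Matrix.mul_apply, conjTranspose_apply, star_trivial, h]

end Aux

section Main

variable {N : ℕ}

/-- The principal submatrix of `A` on the index set `γ`. -/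
def psub {n : ℕ} (A : Matrix (Fin n) (Fin n) ℝ) (γ : Finset (Fin n)) :
    Matrix γ γ ℝ :=
  A.submatrix Subtype.val Subtype.val

lemma psub_posDef {A : Matrix (Fin N) (Fin N) ℝ} (hA : A.PosDef) (γ : Finset (Fin N)) :
    (psub A γ).PosDef :=
  posDef_submatrix_of_injective hA _ Subtype.val_injective

lemma psub_det_pos {A : Matrix (Fin N) (Fin N) ℝ} (hA : A.PosDef) (γ : Finset (Fin N)) :
    0 < (psub A γ).det :=
  (psub_posDef hA γ).det_pos

/-- Reindexing determinant of a principal submatrix. -/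
lemma det_psub_congr {k : Type*} [Fintype k] [DecidableEq k]
    (A : Matrix (Fin N) (Fin N) ℝ) (τ : Finset (Fin N)) (g : k → Fin N)
    (hg : Function.Injective g) (him : ∀ x, x ∈ τ ↔ ∃ a, g a = x) :
    (psub A τ).det = (A.submatrix g g).det := by
  have hmem : ∀ a, g a ∈ τ := fun a => (him (g a)).2 ⟨a, rfl⟩
  let e : k → ↥τ := fun a => ⟨g a, hmem a⟩
  have hbij : Function.Bijective e := by
    constructor
    · intro a b hab
      exact hg (congrArg Subtype.val hab)
    · rintro ⟨x, hx⟩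
      obtain ⟨a, ha⟩ := (him x).1 hx
      exact ⟨a, Subtype.ext ha⟩
  have : A.submatrix g g = (psub A τ).submatrix e e := rfl
  rw [this, ← Matrix.det_submatrix_equiv_self (Equiv.ofBijective e hbij) (psub A τ)]
  rfl

/-- The Schur complement facts for a block extension of a principal submatrix. -/
lemma schur_facts {k : Type*} [Fintype k] [DecidableEq k]
    {A : Matrix (Fin N) (Fin N) ℝ} (hA : A.PosDef) (σ : Finset (Fin N))
    (g : k → Fin N) (hg : Function.Injective g) (hgσ : ∀ a, g a ∉ σ) :
    (A.submatrix (Sum.elim (Subtype.val : ↥σ → Fin N) g)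
        (Sum.elim (Subtype.val : ↥σ → Fin N) g)).det
      = (psub A σ).det *
        (A.submatrix g g - (A.submatrix (Subtype.val : ↥σ → Fin N) g)ᴴ * (psub A σ)⁻¹ *
          (A.submatrix (Subtype.val : ↥σ → Fin N) g)).det
    ∧ (A.submatrix g g - (A.submatrix (Subtype.val : ↥σ → Fin N) g)ᴴ * (psub A σ)⁻¹ *
          (A.submatrix (Subtype.val : ↥σ → Fin N) g)).PosSemidef := by
  set P : Matrix ↥σ ↥σ ℝ := psub A σ with hP
  set B : Matrix ↥σ k ℝ := A.submatrix (Subtype.val : ↥σ → Fin N) g with hB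
  set D : Matrix k k ℝ := A.submatrix g g with hD
  have hPpd : P.PosDef := psub_posDef hA σ
  haveI : Invertible P := Matrix.invertibleOfIsUnitDet P hPpd.det_pos.ne'.isUnit
  have hF : Function.Injective (Sum.elim (Subtype.val : ↥σ → Fin N) g) := by
    rintro (a | a) (b | b) hab <;> simp only [Sum.elim_inl, Sum.elim_inr] at hab
    · exact congrArg Sum.inl (Subtype.ext hab)
    · exact (hgσ b (hab ▸ a.2)).elim
    · exact (hgσ a (hab ▸ b.2)).elim
    · exact congrArg Sum.inr (hg hab)
  have hM : A.submatrix (Sum.elim (Subtype.val : ↥σ → Fin N) g)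
      (Sum.elim (Subtype.val : ↥σ → Fin N) g) = fromBlocks P B Bᴴ D := by
    ext x y
    rcases x with a | a <;> rcases y with b | b
    · rfl
    · rfl
    · show A (g a) b.val = star (A b.val (g a))
      rw [star_trivial, ← hA.1.apply]
      rfl
    · rfl
  constructor
  · rw [hM, Matrix.det_fromBlocks₁₁, invOf_eq_nonsing_inv]
  · have hMpsd : (fromBlocks P B Bᴴ D).PosSemidef := by
      rw [← hM]; exact hA.posSemidef.submatrix _
    exact (Matrix.PosDef.fromBlocks₁₁ B D hPpd).mp hMpsd
  done

end Main

section Step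

variable {N : ℕ} {A : Matrix (Fin N) (Fin N) ℝ}

lemma sumElim_inj {k : Type*} (σ : Finset (Fin N)) (g : k → Fin N)
    (hg : Function.Injective g) (hgσ : ∀ a, g a ∉ σ) :
    Function.Injective (Sum.elim (Subtype.val : ↥σ → Fin N) g) := by
  rintro (a | a) (b | b) hab <;> simp only [Sum.elim_inl, Sum.elim_inr] at hab
  · exact congrArg Sum.inl (Subtype.ext hab)
  · exact (hgσ b (hab ▸ a.2)).elim
  · exact (hgσ a (hab ▸ b.2)).elim
  · exact congrArg Sum.inr (hg hab)

lemma step_det (hA : A.PosDef) (σ : Finset (Fin N)) (i j : Fin N) (hij : i ≠ j)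
    (hi : i ∉ σ) (hj : j ∉ σ) :
    (psub A (insert i (insert j σ))).det * (psub A σ).det ≤
      (psub A (insert i σ)).det * (psub A (insert j σ)).det := by
  have hg2 : Function.Injective (![i, j] : Fin 2 → Fin N) := by
    intro a b hab
    fin_cases a <;> fin_cases b <;>
      simp_all [Matrix.vecHead, Matrix.vecTail, hij, hij.symm]
  have hg2σ : ∀ a, (![i, j] : Fin 2 → Fin N) a ∉ σ := by
    intro a; fin_cases a <;> simpa [Matrix.vecHead, Matrix.vecTail]
  have hgi : Function.Injective (![i] : Fin 1 → Fin N) := fun a b _ => Subsingleton.elim a b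
  have hgj : Function.Injective (![j] : Fin 1 → Fin N) := fun a b _ => Subsingleton.elim a b
  have hgiσ : ∀ a, (![i] : Fin 1 → Fin N) a ∉ σ := by
    intro a; fin_cases a <;> simpa [Matrix.vecHead, Matrix.vecTail]
  have hgjσ : ∀ a, (![j] : Fin 1 → Fin N) a ∉ σ := by
    intro a; fin_cases a <;> simpa [Matrix.vecHead, Matrix.vecTail]
  set P : Matrix ↥σ ↥σ ℝ := psub A σ with hPdef
  set g2 : Fin 2 → Fin N := ![i, j] with hg2def
  set gi : Fin 1 → Fin N := ![i] with hgidef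
  set gj : Fin 1 → Fin N := ![j] with hgjdef
  obtain ⟨hdet2, hpsd2⟩ := schur_facts hA σ g2 hg2 hg2σ
  obtain ⟨hdeti, -⟩ := schur_facts hA σ gi hgi hgiσ
  obtain ⟨hdetj, -⟩ := schur_facts hA σ gj hgj hgjσ
  set B2 : Matrix ↥σ (Fin 2) ℝ := A.submatrix (Subtype.val : ↥σ → Fin N) g2 with hB2
  set Bi : Matrix ↥σ (Fin 1) ℝ := A.submatrix (Subtype.val : ↥σ → Fin N) gi with hBi
  set Bj : Matrix ↥σ (Fin 1) ℝ := A.submatrix (Subtype.val : ↥σ → Fin N) gj with hBj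
  set S2 : Matrix (Fin 2) (Fin 2) ℝ := A.submatrix g2 g2 - B2ᴴ * P⁻¹ * B2 with hS2
  set Si : Matrix (Fin 1) (Fin 1) ℝ := A.submatrix gi gi - Biᴴ * P⁻¹ * Bi with hSi
  set Sj : Matrix (Fin 1) (Fin 1) ℝ := A.submatrix gj gj - Bjᴴ * P⁻¹ * Bj with hSj
  -- identify the determinants of the principal submatrices
  have hd2 : (psub A (insert i (insert j σ))).det = P.det * S2.det := by
    rw [det_psub_congr A _ (Sum.elim (Subtype.val : ↥σ → Fin N) g2)
      (sumElim_inj σ g2 hg2 hg2σ) ?_, hdet2]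
    intro x
    constructor
    · intro hx
      rcases Finset.mem_insert.mp hx with rfl | hx
      · exact ⟨Sum.inr 0, by simp [hg2def, hgjdef, Matrix.vecHead, Matrix.vecTail]⟩
      · rcases Finset.mem_insert.mp hx with rfl | hx
        · exact ⟨Sum.inr 1, by simp [hg2def, hgjdef, Matrix.vecHead, Matrix.vecTail]⟩
        · exact ⟨Sum.inl ⟨x, hx⟩, rfl⟩
    · rintro ⟨a | a, rfl⟩
      · exact Finset.mem_insert_of_mem (Finset.mem_insert_of_mem a.2)
      · fin_cases a <;> simp [hg2def, hgjdef, Matrix.vecHead, Matrix.vecTail]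
  have hdi : (psub A (insert i σ)).det = P.det * Si.det := by
    rw [det_psub_congr A _ (Sum.elim (Subtype.val : ↥σ → Fin N) gi)
      (sumElim_inj σ gi hgi hgiσ) ?_, hdeti]
    intro x
    constructor
    · intro hx
      rcases Finset.mem_insert.mp hx with rfl | hx
      · exact ⟨Sum.inr 0, by simp [hgidef, Matrix.vecHead, Matrix.vecTail]⟩
      · exact ⟨Sum.inl ⟨x, hx⟩, rfl⟩
    · rintro ⟨a | a, rfl⟩
      · exact Finset.mem_insert_of_mem a.2
      · fin_cases a <;> simp [hgidef, Matrix.vecHead, Matrix.vecTail]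
  have hdj : (psub A (insert j σ)).det = P.det * Sj.det := by
    rw [det_psub_congr A _ (Sum.elim (Subtype.val : ↥σ → Fin N) gj)
      (sumElim_inj σ gj hgj hgjσ) ?_, hdetj]
    intro x
    constructor
    · intro hx
      rcases Finset.mem_insert.mp hx with rfl | hx
      · exact ⟨Sum.inr 0, by simp [hgjdef, Matrix.vecHead, Matrix.vecTail]⟩
      · exact ⟨Sum.inl ⟨x, hx⟩, rfl⟩
    · rintro ⟨a | a, rfl⟩
      · exact Finset.mem_insert_of_mem a.2
      · fin_cases a <;> simp [hgjdef, Matrix.vecHead, Matrix.vecTail]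
  -- identify the scalar Schur complements with the diagonal entries of `S2`
  have hSi00 : Si.det = S2 0 0 := by
    rw [Matrix.det_fin_one]
    simp only [hSi, hS2, Matrix.sub_apply, submatrix_apply]
    rw [herm_quad_entry_congr P⁻¹ Bi B2 0 0 (fun a => by simp [hBi, hBj, hB2, hgidef, hg2def, hgjdef, Matrix.vecHead, Matrix.vecTail])]
    simp [hgidef, hg2def, hgjdef, Matrix.vecHead, Matrix.vecTail]
  have hSj00 : Sj.det = S2 1 1 := by
    rw [Matrix.det_fin_one]
    simp only [hSj, hS2, Matrix.sub_apply, submatrix_apply]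
    rw [herm_quad_entry_congr P⁻¹ Bj B2 0 1 (fun a => by simp [hBj, hB2, hgjdef, hg2def, Matrix.vecHead, Matrix.vecTail])]
    simp [hgjdef, hg2def, Matrix.vecHead, Matrix.vecTail]
  -- Hadamard for the 2×2 Schur complement
  have hsym : S2 1 0 = S2 0 1 := by
    have := hpsd2.1.apply 0 1
    simpa using this
  have hS2le : S2.det ≤ S2 0 0 * S2 1 1 := by
    rw [Matrix.det_fin_two, hsym]
    nlinarith [mul_self_nonneg (S2 0 1)]
  have hp : 0 < P.det := psub_det_pos hA σ
  rw [hd2, hdi, hdj, hSi00, hSj00]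
  nlinarith [mul_le_mul_of_nonneg_left hS2le (le_of_lt (mul_pos hp hp))]

end Step

section Mono

variable {N : ℕ} {A : Matrix (Fin N) (Fin N) ℝ}

lemma ratio_insert_le (hA : A.PosDef) (σ : Finset (Fin N)) (i k : Fin N) (hik : i ≠ k)
    (hi : i ∉ σ) (hk : k ∉ σ) :
    (psub A (insert i (insert k σ))).det / (psub A (insert k σ)).det ≤
      (psub A (insert i σ)).det / (psub A σ).det := by
  rw [div_le_div_iff₀ (psub_det_pos hA _) (psub_det_pos hA _)]
  exact step_det hA σ i k hik hi hk

lemma ratio_mono (hA : A.PosDef) (i : Fin N) :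
    ∀ (c : ℕ) (σ δ : Finset (Fin N)), σ ⊆ δ → i ∉ δ → (δ \ σ).card = c →
      (psub A (insert i δ)).det / (psub A δ).det ≤
        (psub A (insert i σ)).det / (psub A σ).det := by
  intro c
  induction c with
  | zero =>
    intro σ δ hσδ hiδ hc
    have : δ = σ :=
      Finset.Subset.antisymm (Finset.sdiff_eq_empty_iff_subset.mp (Finset.card_eq_zero.mp hc)) hσδ
    subst this
    exact le_refl _
  | succ c ih =>
    intro σ δ hσδ hiδ hc
    obtain ⟨k, hk⟩ : (δ \ σ).Nonempty := Finset.card_pos.mp (by omega)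
    have hkδ : k ∈ δ := (Finset.mem_sdiff.mp hk).1
    have hkσ : k ∉ σ := (Finset.mem_sdiff.mp hk).2
    have hδ : δ = insert k (δ.erase k) := (Finset.insert_erase hkδ).symm
    have hσδ' : σ ⊆ δ.erase k :=
      fun x hx => Finset.mem_erase.mpr ⟨fun h => hkσ (h ▸ hx), hσδ hx⟩
    have hiδ' : i ∉ δ.erase k := fun h => hiδ (Finset.erase_subset _ _ h)
    have hkδ' : k ∉ δ.erase k := Finset.notMem_erase k δ
    have hik : i ≠ k := fun h => hiδ (h ▸ hkδ)
    have hcard : (δ.erase k \ σ).card = c := by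
      rw [Finset.erase_sdiff_comm, Finset.card_erase_of_mem hk, hc]; omega
    calc (psub A (insert i δ)).det / (psub A δ).det
        = (psub A (insert i (insert k (δ.erase k)))).det /
            (psub A (insert k (δ.erase k))).det := by rw [← hδ]
      _ ≤ (psub A (insert i (δ.erase k))).det / (psub A (δ.erase k)).det :=
          ratio_insert_le hA _ i k hik hiδ' hkδ'
      _ ≤ (psub A (insert i σ)).det / (psub A σ).det := ih σ _ hσδ' hiδ' hcard

end Mono

/-- The column indices of row `i` of the sparsity pattern `E`. -/
def rowSet {n : ℕ} (E : Finset (Fin n × Fin n)) (i : Fin n) : Finset (Fin n) :=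
  Finset.univ.filter fun j => (i, j) ∈ E

/-- The log-determinant approximation associated with a sparsity pattern. -/
noncomputable def Dapprox {n : ℕ} (A : Matrix (Fin n) (Fin n) ℝ)
    (E : Finset (Fin n × Fin n)) : ℝ :=
  -∑ i : Fin n,
    Real.log ((psub A ((rowSet E i).erase i)).det / (psub A (rowSet E i)).det)

theorem stmt15 {n : ℕ} (A : Matrix (Fin n) (Fin n) ℝ) (hA : A.PosDef)
    (E Ebar : Finset (Fin n × Fin n)) (hEE : E ⊆ Ebar)
    (hlow : ∀ p ∈ E, p.2 ≤ p.1) (hdiag : ∀ i : Fin n, (i, i) ∈ E)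
    (hlow' : ∀ p ∈ Ebar, p.2 ≤ p.1) (hdiag' : ∀ i : Fin n, (i, i) ∈ Ebar) :
    Dapprox A Ebar ≤ Dapprox A E := by
  unfold Dapprox
  rw [neg_le_neg_iff]
  refine Finset.sum_le_sum fun i _ => ?_
  set σ : Finset (Fin n) := (rowSet E i).erase i with hσ
  set δ : Finset (Fin n) := (rowSet Ebar i).erase i with hδ
  have hiE : i ∈ rowSet E i := Finset.mem_filter.mpr ⟨Finset.mem_univ _, hdiag i⟩
  have hiEbar : i ∈ rowSet Ebar i := Finset.mem_filter.mpr ⟨Finset.mem_univ _, hdiag' i⟩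
  have hins : insert i σ = rowSet E i := Finset.insert_erase hiE
  have hins' : insert i δ = rowSet Ebar i := Finset.insert_erase hiEbar
  have hσδ : σ ⊆ δ := by
    intro x hx
    rcases Finset.mem_erase.mp hx with ⟨hxi, hxE⟩
    refine Finset.mem_erase.mpr ⟨hxi, ?_⟩
    rcases Finset.mem_filter.mp hxE with ⟨_, hmem⟩
    exact Finset.mem_filter.mpr ⟨Finset.mem_univ _, hEE hmem⟩
  have hiδ : i ∉ δ := Finset.notMem_erase i _
  have hmono := ratio_mono hA i ((δ \ σ).card) σ δ hσδ hiδ rfl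
  rw [hins, hins'] at hmono
  have h1 : 0 < (psub A (rowSet Ebar i)).det / (psub A δ).det :=
    div_pos (psub_det_pos hA _) (psub_det_pos hA _)
  have hinv := one_div_le_one_div_of_le h1 hmono
  rw [one_div_div, one_div_div] at hinv
  exact Real.log_le_log (div_pos (psub_det_pos hA _) (psub_det_pos hA _)) hinv
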